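/- Let M be a simple matroid, A = Chow_af(M), and F a flat of rank 2. Suppose 𝒢 is a set of flats of M of rank ≥ 2 containing every flat strictly greater than F and no flat ≤ F. Then the colon ideal ((x_G : G ∈ 𝒢) : x_F) equals the graded maximal ideal A_+. -/

import Mathlib

open MvPolynomial
open scoped Classical

/-- The rank of a set `X` in a matroid `M`: the largest cardinality of an
independent subset of `X`. -/
noncomputable def mrk {α : Type*} (M : Matroid α) (X : Set α) : ℕ :=
  sSup {n | ∃ I, M.Indep I ∧ I ⊆ X ∧ I.ncard = n}

/-- A matroid is simple if it has no loops and no parallel pairs, i.e. every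
subset of the ground set with at most two elements is independent. -/
def MSimple {α : Type*} (M : Matroid α) : Prop :=
  ∀ i j, i ∈ M.E → j ∈ M.E → M.Indep {i, j}

/-- The nonempty flats of a matroid, indexing the variables of the Chow ring. -/
def FlatNE {α : Type*} (M : Matroid α) : Type _ := {F : Set α // M.IsFlat F ∧ F.Nonempty}

/-- The defining ideal `I_M + J_M` of the Chow ring of a matroid:
`I_M` is generated by the linear forms `∑_{F ∋ i} x_F` for `i ∈ E`, and
`J_M` by the products `x_F x_G` for incomparable nonempty flats `F, G`. -/
noncomputable def chowIdeal {α : Type*} (M : Matroid α) : Ideal (MvPolynomial (FlatNE M) ℚ) :=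
  Ideal.span {p | ∃ i ∈ M.E, p = ∑ᶠ F : FlatNE M, if i ∈ F.1 then X F else 0} ⊔
  Ideal.span {p | ∃ F G : FlatNE M, ¬F.1 ⊆ G.1 ∧ ¬G.1 ⊆ F.1 ∧ p = X F * X G}
/-- The flats of rank at least 2 of a matroid, indexing the variables of the
atom-free presentation of the Chow ring. -/
def FlatGE2 {α : Type*} (M : Matroid α) : Type _ := {F : Set α // M.IsFlat F ∧ 2 ≤ mrk M F}

/-- The defining ideal `I_af(M)` of the atom-free presentation of the Chow ring
of a matroid `M`, generated by: `x_F x_{F'}` for incomparable flats `F, F'` of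
rank at least 2; `x_F · ∑_{F' ⊇ F ∨ i} x_{F'}` for `F` of rank at least 2 and
`i ∈ E ∖ F`; and `∑_{F ⊇ i ∨ j} x_F² + ∑_{F' ⊋ F ⊇ i ∨ j} 2 x_F x_{F'}` for
distinct `i, j ∈ E`. -/
noncomputable def chowAfIdeal {α : Type*} (M : Matroid α) :
    Ideal (MvPolynomial (FlatGE2 M) ℚ) :=
  Ideal.span
    ({p | ∃ F G : FlatGE2 M, ¬F.1 ⊆ G.1 ∧ ¬G.1 ⊆ F.1 ∧ p = X F * X G} ∪
     {p | ∃ (F : FlatGE2 M) (i : α), i ∈ M.E ∧ i ∉ F.1 ∧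
        p = X F * ∑ᶠ F' : FlatGE2 M, if F.1 ∪ {i} ⊆ F'.1 then X F' else 0} ∪
     {p | ∃ i j : α, i ∈ M.E ∧ j ∈ M.E ∧ i ≠ j ∧
        p = (∑ᶠ F : FlatGE2 M, if i ∈ F.1 ∧ j ∈ F.1 then X F ^ 2 else 0) +
            ∑ᶠ F : FlatGE2 M, ∑ᶠ F' : FlatGE2 M,
              if i ∈ F.1 ∧ j ∈ F.1 ∧ F.1 ⊂ F'.1 then 2 * (X F * X F') else 0})
set_option maxHeartbeats 1000000
section AuxLemmas
-- matroid lemmas (already checked)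
lemma mrk_bdd {α : Type*} [Fintype α] (M : Matroid α) (X : Set α) :
    BddAbove {n | ∃ I, M.Indep I ∧ I ⊆ X ∧ I.ncard = n} := by
  refine ⟨Fintype.card α, fun n hn => ?_⟩
  obtain ⟨I, -, -, rfl⟩ := hn
  have := Set.ncard_le_ncard (Set.subset_univ I) Set.finite_univ
  simpa [Set.ncard_univ] using this

lemma le_mrk {α : Type*} [Fintype α] {M : Matroid α} {X I : Set α}
    (hI : M.Indep I) (hIX : I ⊆ X) : I.ncard ≤ mrk M X :=
  le_csSup (mrk_bdd M X) ⟨I, hI, hIX, rfl⟩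

lemma mrk_attained {α : Type*} [Fintype α] (M : Matroid α) (X : Set α) :
    ∃ I, M.Indep I ∧ I ⊆ X ∧ I.ncard = mrk M X := by
  have hne : {n | ∃ I, M.Indep I ∧ I ⊆ X ∧ I.ncard = n}.Nonempty :=
    ⟨0, ∅, M.empty_indep, Set.empty_subset X, by simp⟩
  exact Nat.sSup_mem hne (mrk_bdd M X)

lemma mrk_mono {α : Type*} [Fintype α] (M : Matroid α) {X Y : Set α} (h : X ⊆ Y) :
    mrk M X ≤ mrk M Y := by
  have hne : {n | ∃ I, M.Indep I ∧ I ⊆ X ∧ I.ncard = n}.Nonempty :=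
    ⟨0, ∅, M.empty_indep, Set.empty_subset X, by simp⟩
  exact csSup_le_csSup (mrk_bdd M Y) hne
    (fun n => fun ⟨I, hI, hIX, hc⟩ => ⟨I, hI, hIX.trans h, hc⟩)

lemma flat_sub_closure {α : Type*} [Fintype α] {M : Matroid α} {F I : Set α}
    (hF : M.IsFlat F) (hF2 : mrk M F = 2) (hI : M.Indep I) (hIF : I ⊆ F)
    (hc : I.ncard = 2) : F ⊆ M.closure I := by
  intro x hx
  by_contra hxcl
  have hxE : x ∈ M.E := hF.subset_ground hx
  have hxI : x ∉ I := fun h => hxcl (M.subset_closure I hI.subset_ground h)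
  have hind : M.Indep (insert x I) :=
    (hI.insert_indep_iff_of_notMem hxI).mpr ⟨hxE, hxcl⟩
  have h3 : (insert x I).ncard = 3 := by
    rw [Set.ncard_insert_of_notMem hxI (Set.toFinite I), hc]
  have := le_mrk hind (Set.insert_subset hx hIF)
  omega

lemma flat_eq_of_subset {α : Type*} [Fintype α] {M : Matroid α} {H F : Set α}
    (hH : M.IsFlat H) (hF : M.IsFlat F) (hHF : H ⊆ F) (h2 : 2 ≤ mrk M H)
    (hF2 : mrk M F = 2) : H = F := by
  have hHm : mrk M H = 2 := le_antisymm (hF2 ▸ mrk_mono M hHF) h2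
  obtain ⟨I, hI, hIH, hc⟩ := mrk_attained M H
  rw [hHm] at hc
  have h1 : F ⊆ M.closure I := flat_sub_closure hF hF2 hI (hIH.trans hHF) hc
  have h2' : M.closure I ⊆ H := by
    rw [← hH.closure]; exact M.closure_subset_closure hIH
  exact subset_antisymm hHF (h1.trans h2')

theorem chowAf_colon_aux {α : Type*} [Fintype α] (M : Matroid α)
    (F : Set α) (hF : M.IsFlat F) (hF2 : mrk M F = 2)
    (𝒢 : Set (Set α))
    (hup : ∀ G : Set α, M.IsFlat G → F ⊂ G → G ∈ 𝒢)
    (hdown : ∀ G ∈ 𝒢, ¬G ⊆ F)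
    (Fv : FlatGE2 M) (hFvF : Fv.1 = F) :
    Submodule.colon
        (Ideal.span {a | ∃ G : FlatGE2 M, G.1 ∈ 𝒢 ∧
          a = Ideal.Quotient.mk (chowAfIdeal M) (X G)})
        (Ideal.span {Ideal.Quotient.mk (chowAfIdeal M) (X Fv)}) =
      Ideal.span {a | ∃ G : FlatGE2 M, a = Ideal.Quotient.mk (chowAfIdeal M) (X G)} := by
  classical
  haveI : Finite (FlatGE2 M) := by unfold FlatGE2; exact Subtype.finite
  haveI : Fintype (FlatGE2 M) := Fintype.ofFinite _
  set mk := Ideal.Quotient.mk (chowAfIdeal M) with hmk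
  set v : FlatGE2 M → DualNumber ℚ := fun G => if G.1 = F then DualNumber.eps else 0 with hv
  set φ : MvPolynomial (FlatGE2 M) ℚ →ₐ[ℚ] DualNumber ℚ := aeval v with hφ
  have hvv : ∀ G G' : FlatGE2 M, v G * v G' = 0 := by
    intro G G'
    simp only [hv]
    split_ifs <;> simp
  have hφX : ∀ G, φ (X G) = v G := fun G => aeval_X v G
  have hφmul : ∀ G G' : FlatGE2 M, φ (X G * X G') = 0 := by
    intro G G'; rw [map_mul, hφX, hφX, hvv]
  have hQker : chowAfIdeal M ≤ RingHom.ker φ.toRingHom := by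
    rw [chowAfIdeal]
    refine Ideal.span_le.mpr ?_
    rintro p ((⟨G, G', -, -, rfl⟩ | ⟨G, i, -, -, rfl⟩) | ⟨i, j, -, -, -, rfl⟩)
    · simpa [RingHom.mem_ker] using hφmul G G'
    · simp only [SetLike.mem_coe, RingHom.mem_ker, AlgHom.toRingHom_eq_coe,
        RingHom.coe_coe, map_mul, hφX]
      rw [finsum_eq_sum_of_fintype, map_sum, Finset.mul_sum]
      refine Finset.sum_eq_zero fun G' _ => ?_
      rw [apply_ite φ, map_zero, hφX]
      split_ifs
      · exact hvv G G'
      · exact mul_zero _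
    · simp only [SetLike.mem_coe, RingHom.mem_ker, AlgHom.toRingHom_eq_coe,
        RingHom.coe_coe, map_add]
      have h1 : φ (∑ᶠ G : FlatGE2 M, if i ∈ G.1 ∧ j ∈ G.1 then X G ^ 2 else 0) = 0 := by
        rw [finsum_eq_sum_of_fintype, map_sum]
        refine Finset.sum_eq_zero fun G _ => ?_
        rw [apply_ite φ, map_zero, map_pow, hφX, sq, hvv, ite_self]
      have h2 : φ (∑ᶠ G : FlatGE2 M, ∑ᶠ G' : FlatGE2 M,
          if i ∈ G.1 ∧ j ∈ G.1 ∧ G.1 ⊂ G'.1 then 2 * (X G * X G') else 0) = 0 := by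
        rw [finsum_eq_sum_of_fintype, map_sum]
        refine Finset.sum_eq_zero fun G _ => ?_
        rw [finsum_eq_sum_of_fintype, map_sum]
        refine Finset.sum_eq_zero fun G' _ => ?_
        rw [apply_ite φ, map_zero, map_mul, hφmul, mul_zero, ite_self]
      rw [h1, h2, add_zero]
  have hTker : Ideal.span {p : MvPolynomial (FlatGE2 M) ℚ | ∃ G : FlatGE2 M, G.1 ∈ 𝒢 ∧ p = X G}
      ≤ RingHom.ker φ.toRingHom := by
    refine Ideal.span_le.mpr ?_
    rintro p ⟨G, hG, rfl⟩
    have hne : G.1 ≠ F := fun h => hdown G.1 hG (h ▸ subset_refl F)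
    simp [RingHom.mem_ker, hφX, hv, hne]
  have hmapT : Ideal.span {a | ∃ G : FlatGE2 M, G.1 ∈ 𝒢 ∧ a = mk (X G)}
      = Ideal.map mk (Ideal.span {p | ∃ G : FlatGE2 M, G.1 ∈ 𝒢 ∧ p = X G}) := by
    rw [Ideal.map_span]
    congr 1
    ext a
    constructor
    · rintro ⟨G, hG, rfl⟩; exact ⟨X G, ⟨G, hG, rfl⟩, rfl⟩
    · rintro ⟨p, ⟨G, hG, rfl⟩, rfl⟩; exact ⟨G, hG, rfl⟩
  have hmapAll : Ideal.span {a | ∃ G : FlatGE2 M, a = mk (X G)}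
      = Ideal.map mk (Ideal.span (Set.range (X : FlatGE2 M → MvPolynomial (FlatGE2 M) ℚ))) := by
    rw [Ideal.map_span]
    congr 1
    ext a
    constructor
    · rintro ⟨G, rfl⟩; exact ⟨X G, ⟨G, rfl⟩, rfl⟩
    · rintro ⟨p, ⟨G, rfl⟩, rfl⟩; exact ⟨G, rfl⟩
  refine le_antisymm ?_ ?_
  · -- colon ≤ A₊
    intro a ha
    obtain ⟨p, rfl⟩ := Ideal.Quotient.mk_surjective a
    have h1 : mk p • mk (X Fv) ∈ Ideal.span {a | ∃ G : FlatGE2 M, G.1 ∈ 𝒢 ∧ a = mk (X G)} :=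
      Submodule.mem_colon.mp ha _ (Ideal.subset_span rfl)
    rw [smul_eq_mul, ← map_mul, hmapT] at h1
    obtain ⟨q, hq, hqe⟩ :=
      (Ideal.mem_map_iff_of_surjective mk Ideal.Quotient.mk_surjective).mp h1
    have hdiff : q - p * X Fv ∈ chowAfIdeal M := Ideal.Quotient.eq.mp hqe
    have hzero : φ (p * X Fv) = 0 := by
      have h2 : φ q = 0 := RingHom.mem_ker.mp (hTker hq)
      have h3 : φ (q - p * X Fv) = 0 := RingHom.mem_ker.mp (hQker hdiff)
      have h4 := map_sub φ q (p * X Fv)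
      rw [h3, h2, zero_sub] at h4
      exact neg_eq_zero.mp h4.symm
    have hφFv : φ (X Fv) = DualNumber.eps := by rw [hφX]; simp [hv, hFvF]
    rw [map_mul, hφFv] at hzero
    have hfst : TrivSqZeroExt.fst (φ p) = 0 := by
      simpa using congrArg TrivSqZeroExt.snd hzero
    have hcc : constantCoeff p = 0 := by
      have hcomp := comp_aeval (f := v) (TrivSqZeroExt.fstHom ℚ ℚ ℚ)
      have h5 := congrArg (fun (ψ : MvPolynomial (FlatGE2 M) ℚ →ₐ[ℚ] ℚ) => ψ p) hcomp
      simp only [AlgHom.coe_comp, Function.comp_apply, TrivSqZeroExt.fstHom_apply] at h5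
      have h6 : (fun G : FlatGE2 M => TrivSqZeroExt.fst (v G)) = fun _ => (0 : ℚ) := by
        funext G; simp only [hv]; split_ifs <;> simp
      rw [h6, aeval_zero'] at h5
      have h7 : (algebraMap ℚ ℚ) (constantCoeff p) = 0 := by rw [← h5]; exact hfst
      simpa using h7
    have hpX : p ∈ Ideal.span (Set.range (X : FlatGE2 M → MvPolynomial (FlatGE2 M) ℚ)) := by
      rw [← Set.image_univ, mem_ideal_span_X_image]
      intro m hm
      by_contra hcon
      push_neg at hcon
      have hm0 : m = 0 := Finsupp.ext fun i => hcon i (Set.mem_univ i)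
      rw [hm0, mem_support_iff] at hm
      exact hm hcc
    rw [hmapAll]
    exact Ideal.mem_map_of_mem _ hpX
  · -- A₊ ≤ colon
    refine Ideal.span_le.mpr ?_
    rintro a ⟨H, rfl⟩
    rw [SetLike.mem_coe]
    have key : mk (X H * X Fv) ∈
        Ideal.span {a | ∃ G : FlatGE2 M, G.1 ∈ 𝒢 ∧ a = mk (X G)} := by
      by_cases hsub : H.1 ⊆ F
      · -- H = Fv, use the quadratic relation
        have hHFs : H.1 = F := flat_eq_of_subset H.2.1 hF hsub H.2.2 hF2
        have hHFv : H = Fv := Subtype.ext (hHFs.trans hFvF.symm)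
        subst hHFv
        obtain ⟨I, hI, hIF, hIc⟩ := mrk_attained M F
        rw [hF2] at hIc
        obtain ⟨i, j, hij, rfl⟩ := Set.ncard_eq_two.mp hIc
        have hiF : i ∈ F := hIF (by simp)
        have hjF : j ∈ F := hIF (by simp)
        have hiE : i ∈ M.E := hF.subset_ground hiF
        have hjE : j ∈ M.E := hF.subset_ground hjF
        have hiFv : i ∈ H.1 := by rw [hFvF]; exact hiF
        have hjFv : j ∈ H.1 := by rw [hFvF]; exact hjF
        have hcls : ∀ G : FlatGE2 M, i ∈ G.1 → j ∈ G.1 → F ⊆ G.1 := by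
          intro G hi hj
          have hA : F ⊆ M.closure {i, j} := flat_sub_closure hF hF2 hI hIF hIc
          have hB : M.closure {i, j} ⊆ G.1 := by
            rw [← G.2.1.closure]
            exact M.closure_subset_closure (by
              rw [Set.insert_subset_iff]; exact ⟨hi, Set.singleton_subset_iff.mpr hj⟩)
          exact hA.trans hB
        have hR : ((∑ᶠ G : FlatGE2 M, if i ∈ G.1 ∧ j ∈ G.1 then X G ^ 2 else 0) +
            ∑ᶠ G : FlatGE2 M, ∑ᶠ G' : FlatGE2 M,
              if i ∈ G.1 ∧ j ∈ G.1 ∧ G.1 ⊂ G'.1 then 2 * (X G * X G') else 0 :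
              MvPolynomial (FlatGE2 M) ℚ) ∈ chowAfIdeal M :=
          Ideal.subset_span (Or.inr ⟨i, j, hiE, hjE, hij, rfl⟩)
        have hS1eq : ((∑ᶠ G : FlatGE2 M, if i ∈ G.1 ∧ j ∈ G.1 then X G ^ 2 else 0 :
              MvPolynomial (FlatGE2 M) ℚ)) =
            X H ^ 2 + ∑ G ∈ Finset.univ.erase H,
              (if i ∈ G.1 ∧ j ∈ G.1 then X G ^ 2 else 0) := by
          rw [finsum_eq_sum_of_fintype,
            ← Finset.add_sum_erase Finset.univ _ (Finset.mem_univ H),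
            if_pos ⟨hiFv, hjFv⟩]
        have hS1' : (∑ G ∈ Finset.univ.erase H,
            (if i ∈ G.1 ∧ j ∈ G.1 then X G ^ 2 else 0) : MvPolynomial (FlatGE2 M) ℚ) ∈
            Ideal.span {p | ∃ G : FlatGE2 M, G.1 ∈ 𝒢 ∧ p = X G} := by
          refine Ideal.sum_mem _ fun G hG => ?_
          split_ifs with h
          · have hGF : F ⊆ G.1 := hcls G h.1 h.2
            have hGne : G.1 ≠ F := fun he =>
              (Finset.mem_erase.mp hG).1 (Subtype.ext (he.trans hFvF.symm))
            have hGmem : G.1 ∈ 𝒢 :=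
              hup G.1 G.2.1 (ssubset_of_subset_of_ne hGF hGne.symm)
            rw [sq]
            exact Ideal.mul_mem_left _ _ (Ideal.subset_span ⟨G, hGmem, rfl⟩)
          · exact Submodule.zero_mem _
        have hS2' : (∑ᶠ G : FlatGE2 M, ∑ᶠ G' : FlatGE2 M,
            if i ∈ G.1 ∧ j ∈ G.1 ∧ G.1 ⊂ G'.1 then 2 * (X G * X G') else 0 :
            MvPolynomial (FlatGE2 M) ℚ) ∈
            Ideal.span {p | ∃ G : FlatGE2 M, G.1 ∈ 𝒢 ∧ p = X G} := by
          rw [finsum_eq_sum_of_fintype]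
          refine Ideal.sum_mem _ fun G _ => ?_
          rw [finsum_eq_sum_of_fintype]
          refine Ideal.sum_mem _ fun G' _ => ?_
          split_ifs with h
          · have hGF : F ⊆ G.1 := hcls G h.1 h.2.1
            have hss : F ⊂ G'.1 := lt_of_le_of_lt hGF h.2.2
            have hmem : G'.1 ∈ 𝒢 := hup G'.1 G'.2.1 hss
            have h2 : (2 : MvPolynomial (FlatGE2 M) ℚ) * (X G * X G')
                = (2 * X G) * X G' := by ring
            rw [h2]
            exact Ideal.mul_mem_left _ _ (Ideal.subset_span ⟨G', hmem, rfl⟩)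
          · exact Submodule.zero_mem _
        have heq : (X H * X H : MvPolynomial (FlatGE2 M) ℚ)
            = ((∑ᶠ G : FlatGE2 M, if i ∈ G.1 ∧ j ∈ G.1 then X G ^ 2 else 0) +
              ∑ᶠ G : FlatGE2 M, ∑ᶠ G' : FlatGE2 M,
                if i ∈ G.1 ∧ j ∈ G.1 ∧ G.1 ⊂ G'.1 then 2 * (X G * X G') else 0)
              - (∑ G ∈ Finset.univ.erase H, (if i ∈ G.1 ∧ j ∈ G.1 then X G ^ 2 else 0))
              - ∑ᶠ G : FlatGE2 M, ∑ᶠ G' : FlatGE2 M,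
                if i ∈ G.1 ∧ j ∈ G.1 ∧ G.1 ⊂ G'.1 then 2 * (X G * X G') else 0 := by
          rw [hS1eq]; ring
        rw [heq, map_sub, map_sub, hmapT]
        have h0 : mk ((∑ᶠ G : FlatGE2 M, if i ∈ G.1 ∧ j ∈ G.1 then X G ^ 2 else 0) +
            ∑ᶠ G : FlatGE2 M, ∑ᶠ G' : FlatGE2 M,
              if i ∈ G.1 ∧ j ∈ G.1 ∧ G.1 ⊂ G'.1 then 2 * (X G * X G') else 0) = 0 :=
          Ideal.Quotient.eq_zero_iff_mem.mpr hR
        rw [h0, zero_sub]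
        exact Ideal.sub_mem _ (Submodule.neg_mem _ (Ideal.mem_map_of_mem mk hS1'))
          (Ideal.mem_map_of_mem mk hS2')
      · by_cases hsup : F ⊆ H.1
        · have hne : F ≠ H.1 := fun h => hsub (h ▸ subset_refl F)
          have hmem : H.1 ∈ 𝒢 := hup H.1 H.2.1 (ssubset_of_subset_of_ne hsup hne)
          rw [map_mul]
          exact Ideal.mul_mem_right _ _ (Ideal.subset_span ⟨H, hmem, rfl⟩)
        · have hc : (X H * X Fv : MvPolynomial (FlatGE2 M) ℚ) ∈ chowAfIdeal M := by
            refine Ideal.subset_span (Or.inl (Or.inl ⟨H, Fv, ?_, ?_, rfl⟩))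
            · rw [hFvF]; exact hsub
            · rw [hFvF]; exact hsup
          have h0 : mk (X H * X Fv) = 0 := Ideal.Quotient.eq_zero_iff_mem.mpr hc
          rw [h0]
          exact Submodule.zero_mem _
    rw [Submodule.mem_colon]
    intro z hz
    obtain ⟨c, hc⟩ := Ideal.mem_span_singleton'.mp hz
    rw [← hc]
    have hre : mk (X H) • (c * mk (X Fv)) = c * mk (X H * X Fv) := by
      rw [map_mul, smul_eq_mul]; ring
    rw [hre]
    exact Ideal.mul_mem_left _ c key

end AuxLemmas

/-- Let `M` be a simple matroid, `A = Chow_af(M)`, and `F` a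
flat of rank 2.  If `𝒢` is a set of flats of rank at least 2 containing every
flat strictly greater than `F` and no flat below or equal to `F`, then the
colon ideal `((x_G : G ∈ 𝒢) : x_F)` is the graded maximal ideal `A₊`
(generated by all the variables). -/
theorem chowAf_colon_rank_two {α : Type*} [Fintype α] (M : Matroid α)
    (hs : MSimple M) (F : Set α) (hF : M.IsFlat F) (hF2 : mrk M F = 2)
    (𝒢 : Set (Set α)) (h𝒢 : ∀ G ∈ 𝒢, M.IsFlat G ∧ 2 ≤ mrk M G)
    (hup : ∀ G : Set α, M.IsFlat G → F ⊂ G → G ∈ 𝒢)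
    (hdown : ∀ G ∈ 𝒢, ¬G ⊆ F) :
    Submodule.colon
        (Ideal.span {a | ∃ G : FlatGE2 M, G.1 ∈ 𝒢 ∧
          a = Ideal.Quotient.mk (chowAfIdeal M) (X G)})
        (Ideal.span {Ideal.Quotient.mk (chowAfIdeal M)
          (X (⟨F, hF, by omega⟩ : FlatGE2 M))}) =
      Ideal.span {a | ∃ G : FlatGE2 M, a = Ideal.Quotient.mk (chowAfIdeal M) (X G)} :=
  chowAf_colon_aux M F hF hF2 𝒢 hup hdown ⟨F, hF, by omega⟩ rfl
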